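/- Let q be a self-join-free Boolean conjunctive query and F an atom of q with zero indegree in the attack graph of q. Let x⃗ enumerate key(F). For every uncertain database db, q is true in every repair of db if and only if there exists a tuple a⃗ of constants from the active domain of db such that q[x⃗→a⃗] is true in every repair of db. -/

import Mathlib

/-- A fact `R(a₁,…,aₙ)`: relation name, primary-key values, non-key values. -/
structure DBFact where
  rel : ℕ
  key : List ℕ
  rest : List ℕ
deriving DecidableEq

/-- Two facts are key-equal if they have the same relation name and primary-key value. -/
def keyEq (A B : DBFact) : Prop := A.rel = B.rel ∧ A.key = B.key

instance (A B : DBFact) : Decidable (keyEq A B) :=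
  inferInstanceAs (Decidable (_ ∧ _))

/-- A set of facts is consistent if it contains no two distinct key-equal facts. -/
def Consistent (s : Finset DBFact) : Prop := ∀ A ∈ s, ∀ B ∈ s, keyEq A B → A = B

/-- A repair of `db` is a maximal (w.r.t. ⊆) consistent subset of `db`. -/
def Repair (db r : Finset DBFact) : Prop :=
  r ⊆ db ∧ Consistent r ∧ ∀ r', r' ⊆ db → Consistent r' → r ⊆ r' → r = r'

/-- A term is a variable (inl) or a constant (inr). -/
abbrev Term := ℕ ⊕ ℕ

/-- An atom `R(t₁,…,tₙ)` with key positions and non-key positions. -/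
structure Atom where
  rel : ℕ
  key : List Term
  rest : List Term
deriving DecidableEq

def termVars (l : List Term) : Finset ℕ := (l.filterMap fun t => t.getLeft?).toFinset

/-- Variables at primary-key positions of an atom. -/
def keyVars (F : Atom) : Finset ℕ := termVars F.key

/-- All variables of an atom. -/
def atomVars (F : Atom) : Finset ℕ := termVars F.key ∪ termVars F.rest

/-- A query (finite set of atoms) is self-join-free: no relation name occurs twice. -/
def SJF (q : Finset Atom) : Prop := ∀ F ∈ q, ∀ G ∈ q, F.rel = G.rel → F = G

/-- Apply a valuation (total map from variables to constants) to an atom, yielding a fact. -/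
def applyVal (θ : ℕ → ℕ) (F : Atom) : DBFact :=
  ⟨F.rel, F.key.map (Sum.elim θ id), F.rest.map (Sum.elim θ id)⟩

/-- Semantic implication of a functional dependency `X → Y` by a set of FDs
(two-tuple semantics, which is equivalent to the standard one for FDs). -/
def FDImplies (fds : Set (Set ℕ × Set ℕ)) (X Y : Set ℕ) : Prop :=
  ∀ θ μ : ℕ → ℕ,
    (∀ p ∈ fds, (∀ v ∈ p.1, θ v = μ v) → ∀ v ∈ p.2, θ v = μ v) →
    (∀ v ∈ X, θ v = μ v) → ∀ v ∈ Y, θ v = μ v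

/-- `FD(q) = { key(F) → vars(F) : F ∈ q }`. -/
def FDs (q : Finset Atom) : Set (Set ℕ × Set ℕ) :=
  {p | ∃ F ∈ q, p = ((keyVars F : Set ℕ), (atomVars F : Set ℕ))}

/-- `F⁺ = { x : FD(q \ {F}) ⊨ key(F) → x }`. -/
def plus (q : Finset Atom) (F : Atom) : Set ℕ :=
  {x | FDImplies (FDs (q.erase F)) (keyVars F : Set ℕ) {x}}

/-- One step of a witness for an attack by `F`: consecutive atoms share a variable outside `F⁺`. -/
def AttackStep (q : Finset Atom) (F : Atom) (A B : Atom) : Prop :=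
  ¬ ((atomVars A ∩ atomVars B : Finset ℕ) : Set ℕ) ⊆ plus q F

/-- `F` attacks `G` in the attack graph of `q`. -/
def Attacks (q : Finset Atom) (F G : Atom) : Prop :=
  F ≠ G ∧ F ∈ q ∧ ∃ L : List Atom, (∀ A ∈ L, A ∈ q) ∧
    List.Chain (AttackStep q F) F L ∧ (F :: L).getLast (List.cons_ne_nil F L) = G

/-- `F` attacks the variable `z`. -/
def AttacksVar (q : Finset Atom) (F : Atom) (z : ℕ) : Prop :=
  z ∉ plus q F ∧ F ∈ q ∧ ∃ L : List Atom, (∀ A ∈ L, A ∈ q) ∧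
    List.Chain (AttackStep q F) F L ∧ z ∈ atomVars ((F :: L).getLast (List.cons_ne_nil F L))

/-- `r ⊨ ζ(q)` for a valuation `ζ` over the variable set `X`. -/
def Sat (r : Finset DBFact) (q : Finset Atom) (X : Finset ℕ) (ζ : ℕ → ℕ) : Prop :=
  ∃ θ : ℕ → ℕ, (∀ v ∈ X, θ v = ζ v) ∧ ∀ F ∈ q, applyVal θ F ∈ r

/-- `r ⊨ q`. -/
def Sat0 (r : Finset DBFact) (q : Finset Atom) : Prop :=
  ∃ θ : ℕ → ℕ, ∀ F ∈ q, applyVal θ F ∈ r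

/-- A fact `A` is relevant for `q` in `r` if `A ∈ θ(q) ⊆ r` for some valuation `θ`. -/
def Relevant (A : DBFact) (q : Finset Atom) (r : Finset DBFact) : Prop :=
  ∃ θ : ℕ → ℕ, (∃ F ∈ q, applyVal θ F = A) ∧ ∀ F ∈ q, applyVal θ F ∈ r

/-- The active domain of a database: the constants occurring in its facts. -/
def adom (db : Finset DBFact) : Set ℕ :=
  {c | ∃ A ∈ db, c ∈ A.key ∨ c ∈ A.rest}

/-!
Take a *frugal* repair `r₀`: one whose set of `F`-key tuples of satisfying valuations is
smallest. Let `θ₀` satisfy `q` in `r₀`; we show that `q[key(F) ↦ θ₀]` holds in every repair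
`r₁`. Otherwise walk from `r₀` towards `r₁`, exchanging a fact of a satisfying valuation by
the key-equal fact of `r₁`. Since no atom attacks a variable of `key(F)`, such an exchange
never creates a new `F`-key tuple: a valuation using the new fact can be glued with the old
one, taking the old values exactly on the variables attacked by the exchanged atom. So the
key tuples only shrink along the walk, and the tuple of `θ₀` eventually disappears,
contradicting frugality.
-/

theorem keyEq.refl (A : DBFact) : keyEq A A := ⟨rfl, rfl⟩

theorem keyEq.symm {A B : DBFact} (h : keyEq A B) : keyEq B A := ⟨h.1.symm, h.2.symm⟩

theorem keyEq.trans {A B C : DBFact} (h₁ : keyEq A B) (h₂ : keyEq B C) : keyEq A C :=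
  ⟨h₁.1.trans h₂.1, h₁.2.trans h₂.2⟩

theorem mem_termVars {v : ℕ} {l : List Term} : v ∈ termVars l ↔ Sum.inl v ∈ l := by
  simp [termVars]

theorem map_sumElim_eq_iff {θ μ : ℕ → ℕ} {l : List Term} :
    l.map (Sum.elim θ id) = l.map (Sum.elim μ id) ↔ ∀ v ∈ termVars l, θ v = μ v := by
  simp only [List.map_inj_left, mem_termVars]
  constructor
  · exact fun h v hv => h _ hv
  · rintro h (v | c) ht
    · exact h v ht
    · rfl

theorem applyVal_eq_iff {θ μ : ℕ → ℕ} {H : Atom} :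
    applyVal θ H = applyVal μ H ↔ ∀ v ∈ atomVars H, θ v = μ v := by
  simp only [applyVal, DBFact.mk.injEq, true_and, map_sumElim_eq_iff, atomVars,
    Finset.mem_union]
  grind

theorem keyEq_applyVal_iff {θ μ : ℕ → ℕ} {H : Atom} :
    keyEq (applyVal θ H) (applyVal μ H) ↔ ∀ v ∈ keyVars H, θ v = μ v := by
  simp only [keyEq, applyVal, true_and, map_sumElim_eq_iff, keyVars]

theorem keyVars_subset_plus (q : Finset Atom) (F : Atom) : (keyVars F : Set ℕ) ⊆ plus q F := by
  rintro z hz θ μ - hkey v rfl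
  exact hkey v hz

/-- By consistency of `r`, the pair `θ, μ` respects every dependency of `FD(q \ {G})`. -/
theorem eq_on_plus {q : Finset Atom} {G : Atom} {r : Finset DBFact} (hr : Consistent r)
    {θ μ : ℕ → ℕ} (hθ : ∀ H ∈ q.erase G, applyVal θ H ∈ r)
    (hμ : ∀ H ∈ q.erase G, applyVal μ H ∈ r) (hkey : ∀ v ∈ keyVars G, θ v = μ v)
    {z : ℕ} (hz : z ∈ plus q G) : θ z = μ z := by
  refine hz θ μ ?_ hkey z rfl
  rintro _ ⟨H, hH, rfl⟩ hHkey
  exact applyVal_eq_iff.1 <| hr _ (hθ H hH) _ (hμ H hH) (keyEq_applyVal_iff.2 hHkey)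

theorem Consistent.mono {s t : Finset DBFact} (ht : Consistent t) (hst : s ⊆ t) :
    Consistent s :=
  fun A hA B hB => ht A (hst hA) B (hst hB)

theorem Consistent.insert {s : Finset DBFact} {B : DBFact} (hs : Consistent s)
    (hB : ∀ A ∈ s, ¬ keyEq A B) : Consistent (insert B s) := by
  intro X hX Y hY hXY
  rcases Finset.mem_insert.1 hX with rfl | hXs
  · rcases Finset.mem_insert.1 hY with rfl | hYs
    · rfl
    · exact absurd hXY.symm (hB Y hYs)
  · rcases Finset.mem_insert.1 hY with rfl | hYs
    · exact absurd hXY (hB X hXs)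
    · exact hs X hXs Y hYs hXY

theorem repair_iff {db r : Finset DBFact} :
    Repair db r ↔ r ⊆ db ∧ Consistent r ∧ ∀ C ∈ db, ∃ A ∈ r, keyEq A C := by
  refine ⟨fun ⟨hsub, hr, hmax⟩ => ⟨hsub, hr, fun C hC => ?_⟩,
    fun ⟨hsub, hr, hcover⟩ => ⟨hsub, hr, fun r' hsub' hr' hrr' => ?_⟩⟩
  · by_contra! hC'
    have hCr : C ∈ r := (hmax _ (Finset.insert_subset hC hsub) (hr.insert hC')
      (Finset.subset_insert C r)) ▸ Finset.mem_insert_self C r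
    exact hC' C hCr (keyEq.refl C)
  · refine hrr'.antisymm fun C hC => ?_
    obtain ⟨A, hA, hAC⟩ := hcover C (hsub' hC)
    exact hr' A (hrr' hA) C hC hAC ▸ hA

open Classical in
theorem exists_repair (db : Finset DBFact) : ∃ r, Repair db r := by
  obtain ⟨r, ⟨hr, hmax⟩⟩ := Finset.exists_maximal
    (s := db.powerset.filter Consistent) ⟨∅, by simp [Consistent]⟩
  simp only [Finset.mem_filter, Finset.mem_powerset] at hr hmax
  exact ⟨r, hr.1, hr.2, fun r' hr'db hr' hrr' => (hmax ⟨hr'db, hr'⟩ hrr').antisymm' hrr'⟩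

theorem Repair.exchange {db r : Finset DBFact} (h : Repair db r) {A B : DBFact}
    (hA : A ∈ r) (hB : B ∈ db) (hAB : keyEq A B) : Repair db (insert B (r.erase A)) := by
  obtain ⟨hsub, hr, hcover⟩ := repair_iff.1 h
  refine repair_iff.2 ⟨Finset.insert_subset hB ((Finset.erase_subset A r).trans hsub),
    (hr.mono (Finset.erase_subset A r)).insert fun X hX hXB => ?_, fun C hC => ?_⟩
  · exact (Finset.mem_erase.1 hX).1 (hr X (Finset.mem_of_mem_erase hX) A hA (hXB.trans hAB.symm))
  · obtain ⟨A', hA', hA'C⟩ := hcover C hC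
    by_cases hA'A : A' = A
    · exact ⟨B, Finset.mem_insert_self B _, hAB.symm.trans (hA'A ▸ hA'C)⟩
    · exact ⟨A', Finset.mem_insert_of_mem (Finset.mem_erase.2 ⟨hA'A, hA'⟩), hA'C⟩

section AttackGraph

variable {q : Finset Atom} {G : Atom}

/-- `Attacks q G H` is `G ≠ H ∧ G ∈ q ∧ AttackPath q G H`. -/
def AttackPath (q : Finset Atom) (G H : Atom) : Prop :=
  ∃ L : List Atom, (∀ A ∈ L, A ∈ q) ∧ List.IsChain (AttackStep q G) (G :: L) ∧
    (G :: L).getLast (List.cons_ne_nil G L) = H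

theorem AttackPath.refl (q : Finset Atom) (G : Atom) : AttackPath q G G :=
  ⟨[], by simp, .singleton G, rfl⟩

theorem AttackPath.snoc {H H' : Atom} (h : AttackPath q G H) (hH' : H' ∈ q)
    (hstep : AttackStep q G H H') : AttackPath q G H' := by
  obtain ⟨L, hLq, hchain, rfl⟩ := h
  refine ⟨L ++ [H'], ?_, ?_, by simp⟩
  · simpa [or_imp, forall_and] using ⟨hLq, hH'⟩
  · rw [← List.cons_append]
    exact hchain.append (.singleton H') (by simp [List.getLast?_eq_getLast_of_ne_nil, hstep])

theorem attackStep_of_mem {A B : Atom} {z : ℕ} (hA : z ∈ atomVars A) (hB : z ∈ atomVars B)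
    (hz : z ∉ plus q G) : AttackStep q G A B :=
  fun h => hz (h (by simp [hA, hB]))

theorem AttackPath.attacksVar {H : Atom} {z : ℕ} (h : AttackPath q G H) (hG : G ∈ q)
    (hzH : z ∈ atomVars H) (hz : z ∉ plus q G) : AttacksVar q G z := by
  obtain ⟨L, hLq, hchain, rfl⟩ := h
  exact ⟨hz, hG, L, hLq, hchain, hzH⟩

theorem AttacksVar.attackPath {H : Atom} {z : ℕ} (h : AttacksVar q G z) (hH : H ∈ q)
    (hzH : z ∈ atomVars H) : AttackPath q G H := by
  obtain ⟨hz, -, L, hLq, hchain, hzlast⟩ := h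
  exact AttackPath.snoc ⟨L, hLq, hchain, rfl⟩ hH (attackStep_of_mem hzlast hzH hz)

theorem not_attacksVar_of_mem_keyVars {F : Atom} (hF : F ∈ q)
    (hind : ∀ G ∈ q, ¬ Attacks q G F) {z : ℕ} (hz : z ∈ keyVars F) (G : Atom) :
    ¬ AttacksVar q G z := by
  intro hatt
  by_cases hGF : G = F
  · exact hatt.1 (hGF ▸ keyVars_subset_plus q F hz)
  · exact hind G hatt.2.1 ⟨hGF, hatt.2.1, hatt.attackPath hF (Finset.mem_union_left _ hz)⟩

end AttackGraph

section Exchange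

variable {q : Finset Atom} {G : Atom} {r : Finset DBFact}

/-- On the atoms reachable from `G` the glued valuation coincides with `θ`, since their
variables are attacked by `G` or lie in `G⁺`, where `θ` and `μ` agree; on the other atoms
it coincides with `μ`. -/
theorem exists_glued_valuation (hr : Consistent r) (hG : G ∈ q) {θ μ : ℕ → ℕ}
    (hθ : ∀ H ∈ q, applyVal θ H ∈ r) (hμ : ∀ H ∈ q.erase G, applyVal μ H ∈ r)
    (hkey : ∀ v ∈ keyVars G, θ v = μ v) :
    ∃ ν : ℕ → ℕ, (∀ v, ¬ AttacksVar q G v → ν v = μ v) ∧ ∀ H ∈ q, applyVal ν H ∈ r := by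
  classical
  refine ⟨fun v => if AttacksVar q G v then θ v else μ v, fun v hv => if_neg hv, fun H hH => ?_⟩
  by_cases hpath : AttackPath q G H
  · have hplus : ∀ z ∈ plus q G, θ z = μ z := fun z hz => eq_on_plus hr
      (fun H hH => hθ H (Finset.mem_of_mem_erase hH)) hμ hkey hz
    convert hθ H hH using 1
    refine applyVal_eq_iff.2 fun v hv => ?_
    split_ifs with hatt
    · rfl
    · exact (hplus v (by_contra fun hvp => hatt (hpath.attacksVar hG hv hvp))).symm
  · have hHG : H ≠ G := by rintro rfl; exact hpath (AttackPath.refl q H)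
    convert hμ H (Finset.mem_erase.2 ⟨hHG, hH⟩) using 1
    exact applyVal_eq_iff.2 fun v hv => if_neg fun hatt => hpath (hatt.attackPath hH hv)

theorem exists_valuation_of_exchange (hq : SJF q) (hr : Consistent r) (hG : G ∈ q)
    {θ : ℕ → ℕ} (hθ : ∀ H ∈ q, applyVal θ H ∈ r) {B : DBFact} (hB : keyEq (applyVal θ G) B)
    {μ : ℕ → ℕ} (hμ : ∀ H ∈ q, applyVal μ H ∈ insert B (r.erase (applyVal θ G))) :
    ∃ ν : ℕ → ℕ, (∀ v, ¬ AttacksVar q G v → ν v = μ v) ∧ ∀ H ∈ q, applyVal ν H ∈ r := by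
  have hrest : ∀ H ∈ q.erase G, applyVal μ H ∈ r := by
    intro H hH
    obtain ⟨hHG, hH⟩ := Finset.mem_erase.1 hH
    rcases Finset.mem_insert.1 (hμ H hH) with hHB | hHr
    · exact absurd (hq H hH G hG ((congrArg DBFact.rel hHB).trans hB.1.symm)) hHG
    · exact Finset.mem_of_mem_erase hHr
  by_cases hGB : applyVal μ G = B
  · exact exists_glued_valuation hr hG hθ hrest (keyEq_applyVal_iff.1 (hGB ▸ hB))
  · have hGr : applyVal μ G ∈ r :=
      Finset.mem_of_mem_erase ((Finset.mem_insert.1 (hμ G hG)).resolve_left hGB)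
    refine ⟨μ, fun _ _ => rfl, fun H hH => ?_⟩
    by_cases hHG : H = G
    · exact hHG ▸ hGr
    · exact hrest H (Finset.mem_erase.2 ⟨hHG, hH⟩)

end Exchange

section FrugalRepair

variable {q : Finset Atom} {F : Atom} {db : Finset DBFact}

open Classical in
/-- A repair with the fewest `F`-key tuples of satisfying valuations is *frugal*. -/
noncomputable def keyTuples (q : Finset Atom) (F : Atom) (r : Finset DBFact) :
    Finset (List ℕ) :=
  (r.image DBFact.key).filter fun l =>
    ∃ θ : ℕ → ℕ, (∀ H ∈ q, applyVal θ H ∈ r) ∧ (applyVal θ F).key = l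

theorem mem_keyTuples (hF : F ∈ q) {r : Finset DBFact} {l : List ℕ} :
    l ∈ keyTuples q F r ↔ ∃ θ : ℕ → ℕ, (∀ H ∈ q, applyVal θ H ∈ r) ∧ (applyVal θ F).key = l := by
  simp only [keyTuples, Finset.mem_filter, Finset.mem_image, and_iff_right_iff_imp]
  rintro ⟨θ, hθ, rfl⟩
  exact ⟨_, hθ F hF, rfl⟩

theorem keyTuples_exchange_subset (hq : SJF q) (hF : F ∈ q) (hind : ∀ G ∈ q, ¬ Attacks q G F)
    {r : Finset DBFact} (hr : Consistent r) {G : Atom} (hG : G ∈ q) {θ : ℕ → ℕ}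
    (hθ : ∀ H ∈ q, applyVal θ H ∈ r) {B : DBFact} (hB : keyEq (applyVal θ G) B) :
    keyTuples q F (insert B (r.erase (applyVal θ G))) ⊆ keyTuples q F r := by
  intro l hl
  obtain ⟨μ, hμ, rfl⟩ := (mem_keyTuples hF).1 hl
  obtain ⟨ν, hνμ, hν⟩ := exists_valuation_of_exchange hq hr hG hθ hB hμ
  have hkey : ∀ v ∈ keyVars F, ν v = μ v :=
    fun v hv => hνμ v (not_attacksVar_of_mem_keyVars hF hind hv G)
  exact (mem_keyTuples hF).2 ⟨ν, hν, (keyEq_applyVal_iff.2 hkey).2⟩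

theorem exists_repair_keyTuples_ssubset (hq : SJF q) (hF : F ∈ q)
    (hind : ∀ G ∈ q, ¬ Attacks q G F) {r r₁ : Finset DBFact} (hr : Repair db r)
    (hr₁ : Repair db r₁) {l : List ℕ} (hl : l ∈ keyTuples q F r) (hl₁ : l ∉ keyTuples q F r₁) :
    ∃ r', Repair db r' ∧ keyTuples q F r' ⊂ keyTuples q F r := by
  classical
  induction hn : (r \ r₁).card using Nat.strong_induction_on generalizing r with
  | _ n ih =>
  obtain ⟨θ, hθ, hθl⟩ := (mem_keyTuples hF).1 hl
  obtain ⟨G, hG, hGr₁⟩ : ∃ G ∈ q, applyVal θ G ∉ r₁ := by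
    by_contra! h
    exact hl₁ ((mem_keyTuples hF).2 ⟨θ, h, hθl⟩)
  obtain ⟨B, hBr₁, hBG⟩ := (repair_iff.1 hr₁).2.2 _ (hr.1 (hθ G hG))
  have hr' := hr.exchange (hθ G hG) (hr₁.1 hBr₁) hBG.symm
  have hsub := keyTuples_exchange_subset hq hF hind hr.2.1 hG hθ hBG.symm
  have hcard : (insert B (r.erase (applyVal θ G)) \ r₁).card < n := by
    rw [Finset.insert_sdiff_of_mem _ hBr₁, Finset.erase_sdiff_comm, ← hn]
    exact Finset.card_erase_lt_of_mem (Finset.mem_sdiff.2 ⟨hθ G hG, hGr₁⟩)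
  by_cases hl' : l ∈ keyTuples q F (insert B (r.erase (applyVal θ G)))
  · obtain ⟨r'', hr'', hss⟩ := ih _ hcard hr' hl' rfl
    exact ⟨r'', hr'', hss.trans_subset hsub⟩
  · exact ⟨_, hr', hsub, fun h => hl' (h hl)⟩

theorem exists_repair_keyTuples_subset (hq : SJF q) (hF : F ∈ q)
    (hind : ∀ G ∈ q, ¬ Attacks q G F) (db : Finset DBFact) :
    ∃ r₀, Repair db r₀ ∧ ∀ r₁, Repair db r₁ → keyTuples q F r₀ ⊆ keyTuples q F r₁ := by
  classical
  obtain ⟨r, hr⟩ := exists_repair db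
  obtain ⟨r₀, hr₀, hmin⟩ := (db.powerset.filter (Repair db)).exists_min_image
    (fun r => (keyTuples q F r).card) ⟨r, Finset.mem_filter.2 ⟨Finset.mem_powerset.2 hr.1, hr⟩⟩
  have hr₀ : Repair db r₀ := (Finset.mem_filter.1 hr₀).2
  refine ⟨r₀, hr₀, fun r₁ hr₁ l hl => by_contra fun hl₁ => ?_⟩
  obtain ⟨r', hr', hss⟩ := exists_repair_keyTuples_ssubset hq hF hind hr₀ hr₁ hl hl₁
  exact (Finset.card_lt_card hss).not_ge
    (hmin r' (Finset.mem_filter.2 ⟨Finset.mem_powerset.2 hr'.1, hr'⟩))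

end FrugalRepair

/-- If `F` has zero indegree in the attack graph of `q`, then `q` is true in every
repair of `db` iff for some tuple of active-domain constants substituted for the key
variables of `F`, the instantiated query is true in every repair of `db`. -/
theorem reify_unattacked_atom (q : Finset Atom) (hq : SJF q) (F : Atom) (hF : F ∈ q)
    (hind : ∀ G ∈ q, ¬ Attacks q G F) (db : Finset DBFact) :
    (∀ r, Repair db r → Sat0 r q) ↔
    (∃ ζ : ℕ → ℕ, (∀ v ∈ keyVars F, ζ v ∈ adom db) ∧
      ∀ r, Repair db r → Sat r q (keyVars F) ζ) := by
  refine ⟨fun hall => ?_, fun ⟨ζ, _, hζ⟩ r hr => ?_⟩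
  · obtain ⟨r₀, hr₀, hfrugal⟩ := exists_repair_keyTuples_subset hq hF hind db
    obtain ⟨θ₀, hθ₀⟩ := hall r₀ hr₀
    refine ⟨θ₀, fun v hv => ?_, fun r₁ hr₁ => ?_⟩
    · exact ⟨applyVal θ₀ F, hr₀.1 (hθ₀ F hF),
        Or.inl (List.mem_map_of_mem (f := Sum.elim θ₀ id) (mem_termVars.1 hv))⟩
    · obtain ⟨θ, hθ, hkey⟩ :=
        (mem_keyTuples hF).1 (hfrugal r₁ hr₁ ((mem_keyTuples hF).2 ⟨θ₀, hθ₀, rfl⟩))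
      exact ⟨θ, keyEq_applyVal_iff.1 ⟨rfl, hkey⟩, hθ⟩
  · obtain ⟨θ, -, hθ⟩ := hζ r hr
    exact ⟨θ, hθ⟩
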